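/- Let n ≥ 2 be an integer and λ, σ ∈ ℂ. On the open unit ball B ⊂ ℝ^{n−1}, P_σ( (1−|Y|²)^σ ) = −(λ + σ(n−1+σ)) · (1−|Y|²)^σ at every point of B. In particular (1−|Y|²)^σ lies in the kernel of P_σ on B if and only if σ(n−1+σ) = −λ, i.e. if and only if σ = ŝ₊(λ) or σ = ŝ₋(λ). -/

import Mathlib

/-- `∂ⱼ` on functions on `ℝ^m`. -/
noncomputable def pd {m : ℕ} (j : Fin m) (u : (Fin m → ℝ) → ℂ) (Y : Fin m → ℝ) : ℂ :=
  fderiv ℝ u Y (Pi.single j 1)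

/-- The Euler vector field `E u (Y) = Σⱼ Yⱼ ∂ⱼ u (Y)`. -/
noncomputable def euler {m : ℕ} (u : (Fin m → ℝ) → ℂ) (Y : Fin m → ℝ) : ℂ :=
  ∑ j, (Y j : ℂ) * pd j u Y

/-- The Euclidean Laplacian `Δ u = Σⱼ ∂ⱼ² u`. -/
noncomputable def lap {m : ℕ} (u : (Fin m → ℝ) → ℂ) (Y : Fin m → ℝ) : ℂ :=
  ∑ j, pd j (pd j u) Y

/-- The normal operator family `P_σ u = −(E + (n−1−σ))((E − σ)u) + Δ_Y u − λ u`
acting on functions on `ℝ^{n−1}` (the real form of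
`(YD_Y − i(n−1−σ))(YD_Y + iσ) − Δ_Y − λ`). -/
noncomputable def Pop (n : ℕ) (lam σ : ℂ) (u : (Fin (n - 1) → ℝ) → ℂ)
    (Y : Fin (n - 1) → ℝ) : ℂ :=
  -(euler (fun Z => euler u Z - σ * u Z) Y
      + ((n : ℂ) - 1 - σ) * (euler u Y - σ * u Y))
    + lap u Y - lam * u Y

/-! For a radial function `u = g (|Y|²)` one has `E u = 2 r g'(r)` and
`Δ u = 4 r g''(r) + 2 (n - 1) g'(r)` at `r = |Y|²`, so `P_σ u` is an explicit expression in
`g, g', g''`. For `g(r) = (1 - r)^σ` every power is `(1 - r)^σ` divided by a power of `1 - r`,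
and the terms carrying `r` cancel. Evaluating at `Y = 0` gives the kernel criterion, and the
quadratic formula identifies its roots. -/

open Filter Topology

noncomputable def sumSq {m : ℕ} (Z : Fin m → ℝ) : ℝ := ∑ j, Z j ^ 2

section RadialCalculus

variable {m : ℕ}

theorem continuous_sumSq : Continuous (sumSq : (Fin m → ℝ) → ℝ) := by
  unfold sumSq; fun_prop

theorem hasFDerivAt_sumSq (Y : Fin m → ℝ) :
    HasFDerivAt sumSq (∑ j, (2 * Y j) • (ContinuousLinearMap.proj j : (Fin m → ℝ) →L[ℝ] ℝ)) Y := by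
  unfold sumSq
  refine HasFDerivAt.fun_sum fun j _ => ?_
  simpa using (hasFDerivAt_apply (𝕜 := ℝ) j Y).pow 2

theorem HasFDerivAt.pd_eq {u : (Fin m → ℝ) → ℂ} {L : (Fin m → ℝ) →L[ℝ] ℂ} {Y : Fin m → ℝ}
    (h : HasFDerivAt u L Y) (j : Fin m) : pd j u Y = L (Pi.single j 1) := by
  rw [pd, h.fderiv]

theorem pd_congr {u v : (Fin m → ℝ) → ℂ} {Y : Fin m → ℝ} (h : u =ᶠ[𝓝 Y] v) (j : Fin m) :
    pd j u Y = pd j v Y := by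
  rw [pd, pd, h.fderiv_eq]

theorem euler_congr {u v : (Fin m → ℝ) → ℂ} {Y : Fin m → ℝ} (h : u =ᶠ[𝓝 Y] v) :
    euler u Y = euler v Y := by
  simp only [euler, pd_congr h]

theorem hasFDerivAt_comp_sumSq {g : ℝ → ℂ} {g' : ℂ} {Y : Fin m → ℝ}
    (hg : HasDerivAt g g' (sumSq Y)) :
    HasFDerivAt (fun Z => g (sumSq Z)) ((ContinuousLinearMap.smulRight (1 : ℝ →L[ℝ] ℝ) g').comp
      (∑ j, (2 * Y j) • (ContinuousLinearMap.proj j : (Fin m → ℝ) →L[ℝ] ℝ))) Y :=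
  hg.hasFDerivAt.comp Y (hasFDerivAt_sumSq Y)

theorem pd_comp_sumSq {g : ℝ → ℂ} {g' : ℂ} {Y : Fin m → ℝ} (hg : HasDerivAt g g' (sumSq Y))
    (j : Fin m) : pd j (fun Z => g (sumSq Z)) Y = 2 * Y j * g' := by
  rw [(hasFDerivAt_comp_sumSq hg).pd_eq]
  simp [Pi.single_apply]

theorem euler_comp_sumSq {g : ℝ → ℂ} {g' : ℂ} {Y : Fin m → ℝ} (hg : HasDerivAt g g' (sumSq Y)) :
    euler (fun Z => g (sumSq Z)) Y = 2 * sumSq Y * g' := by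
  simp only [euler, pd_comp_sumSq hg]
  simp only [sumSq, Complex.ofReal_sum, Complex.ofReal_pow, Finset.mul_sum, Finset.sum_mul]
  exact Finset.sum_congr rfl fun j _ => by ring

theorem lap_comp_sumSq {g g' : ℝ → ℂ} {g'' : ℂ} {Y : Fin m → ℝ}
    (hg : ∀ᶠ t in 𝓝 (sumSq Y), HasDerivAt g (g' t) t) (hg' : HasDerivAt g' g'' (sumSq Y)) :
    lap (fun Z => g (sumSq Z)) Y = 4 * sumSq Y * g'' + 2 * m * g' (sumSq Y) := by
  have hnear : ∀ᶠ Z in 𝓝 Y, HasDerivAt g (g' (sumSq Z)) (sumSq Z) :=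
    continuous_sumSq.continuousAt.eventually hg
  have hpd : ∀ j, pd j (pd j fun Z => g (sumSq Z)) Y = 2 * g' (sumSq Y) + 4 * g'' * Y j ^ 2 := by
    intro j
    have hev : pd j (fun Z => g (sumSq Z)) =ᶠ[𝓝 Y] fun Z => 2 * Z j * g' (sumSq Z) :=
      hnear.mono fun Z hZ => pd_comp_sumSq hZ j
    have hcoord : HasFDerivAt (fun Z : Fin m → ℝ => 2 * (Z j : ℂ))
        ((2 : ℂ) • Complex.ofRealCLM.comp (ContinuousLinearMap.proj j)) Y :=
      (Complex.ofRealCLM.hasFDerivAt.comp Y (hasFDerivAt_apply j Y)).const_mul 2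
    rw [pd_congr hev, (hcoord.fun_mul (hasFDerivAt_comp_sumSq hg')).pd_eq]
    simp [Pi.single_apply]
    ring
  simp only [lap, hpd]
  simp only [Finset.sum_add_distrib, Finset.sum_const, Finset.card_univ, Fintype.card_fin,
    nsmul_eq_mul, ← Finset.mul_sum, sumSq, Complex.ofReal_sum, Complex.ofReal_pow]
  ring

theorem euler_euler_sub_comp_sumSq (σ : ℂ) {g g' : ℝ → ℂ} {g'' : ℂ} {Y : Fin m → ℝ}
    (hg : ∀ᶠ t in 𝓝 (sumSq Y), HasDerivAt g (g' t) t) (hg' : HasDerivAt g' g'' (sumSq Y)) :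
    euler (fun Z => euler (fun W => g (sumSq W)) Z - σ * g (sumSq Z)) Y
      = 2 * sumSq Y * (2 * g' (sumSq Y) + 2 * sumSq Y * g'' - σ * g' (sumSq Y)) := by
  have hev : (fun Z => euler (fun W => g (sumSq W)) Z - σ * g (sumSq Z)) =ᶠ[𝓝 Y]
      fun Z => (fun t : ℝ => 2 * t * g' t - σ * g t) (sumSq Z) :=
    (continuous_sumSq.continuousAt.eventually hg).mono fun Z hZ => by
      beta_reduce
      rw [euler_comp_sumSq hZ]
  have hderiv : HasDerivAt (fun t : ℝ => 2 * t * g' t - σ * g t)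
      (2 * g' (sumSq Y) + 2 * sumSq Y * g'' - σ * g' (sumSq Y)) (sumSq Y) :=
    ((((hasDerivAt_id' (sumSq Y)).ofReal_comp.const_mul 2).fun_mul hg').fun_sub
      (hg.self_of_nhds.const_mul σ)).congr_deriv (by simp)
  rw [euler_congr hev, euler_comp_sumSq hderiv]

end RadialCalculus

theorem Pop_comp_sumSq (n : ℕ) (lam σ : ℂ) {g g' : ℝ → ℂ} {g'' : ℂ} {Y : Fin (n - 1) → ℝ}
    (hg : ∀ᶠ t in 𝓝 (sumSq Y), HasDerivAt g (g' t) t) (hg' : HasDerivAt g' g'' (sumSq Y)) :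
    Pop n lam σ (fun Z => g (sumSq Z)) Y =
      -(2 * sumSq Y * (2 * g' (sumSq Y) + 2 * sumSq Y * g'' - σ * g' (sumSq Y))
          + ((n : ℂ) - 1 - σ) * (2 * sumSq Y * g' (sumSq Y) - σ * g (sumSq Y)))
        + (4 * sumSq Y * g'' + 2 * (n - 1 : ℕ) * g' (sumSq Y)) - lam * g (sumSq Y) := by
  rw [Pop, euler_euler_sub_comp_sumSq σ hg hg', euler_comp_sumSq hg.self_of_nhds,
    lap_comp_sumSq hg hg']

theorem hasDerivAt_one_sub_cpow (a : ℂ) {t : ℝ} (ht : t < 1) :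
    HasDerivAt (fun s : ℝ => ((1 - s : ℝ) : ℂ) ^ a) (-a * ((1 - t : ℝ) : ℂ) ^ (a - 1)) t := by
  have hslit : ((1 - t : ℝ) : ℂ) ∈ Complex.slitPlane :=
    Complex.ofReal_mem_slitPlane.2 (by linarith)
  refine ((Complex.hasStrictDerivAt_cpow_const hslit).hasDerivAt.comp t
    ((hasDerivAt_id' t).const_sub 1).ofReal_comp).congr_deriv ?_
  push_cast
  ring

theorem Pop_one_sub_sumSq_cpow {n : ℕ} (hn : 1 ≤ n) (lam σ : ℂ) {Y : Fin (n - 1) → ℝ}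
    (hY : sumSq Y < 1) :
    Pop n lam σ (fun Z => ((1 - sumSq Z : ℝ) : ℂ) ^ σ) Y
      = -(lam + σ * ((n : ℂ) - 1 + σ)) * ((1 - sumSq Y : ℝ) : ℂ) ^ σ := by
  have hg : ∀ᶠ t in 𝓝 (sumSq Y), HasDerivAt (fun s : ℝ => ((1 - s : ℝ) : ℂ) ^ σ)
      (-σ * ((1 - t : ℝ) : ℂ) ^ (σ - 1)) t :=
    (eventually_lt_nhds hY).mono fun t ht => hasDerivAt_one_sub_cpow σ ht
  rw [Pop_comp_sumSq n lam σ hg ((hasDerivAt_one_sub_cpow (σ - 1) hY).const_mul (-σ))]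
  set c : ℂ := ((1 - sumSq Y : ℝ) : ℂ) with hc_def
  have hc : c ≠ 0 := Complex.ofReal_ne_zero.2 (by linarith)
  have hr : (sumSq Y : ℂ) = 1 - c := by rw [hc_def]; push_cast; ring
  rw [Complex.cpow_sub (σ - 1) 1 hc, Complex.cpow_sub σ 1 hc, Complex.cpow_one, hr, Nat.cast_sub hn]
  field_simp
  push_cast
  ring

theorem mul_add_eq_neg_iff {m lam σ w : ℂ} (hw : w ^ 2 = (m / 2) ^ 2 - lam) :
    σ * (m + σ) = -lam ↔ σ = -m / 2 + w ∨ σ = -m / 2 - w := by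
  have hd : discrim 1 m lam = (2 * w) * (2 * w) := by
    rw [discrim]; linear_combination -4 * hw
  rw [← add_eq_zero_iff_eq_neg, show σ * (m + σ) + lam = 1 * (σ * σ) + m * σ + lam by ring,
    quadratic_eq_zero_iff one_ne_zero hd σ]
  ring_nf

/-- on the open unit ball `B ⊂ ℝ^{n−1}`,
`P_σ((1−|Y|²)^σ) = −(λ + σ(n−1+σ))·(1−|Y|²)^σ`; in particular `(1−|Y|²)^σ` lies in the
kernel of `P_σ` on `B` iff `σ(n−1+σ) = −λ`, i.e. iff `σ = ŝ₊(λ)` or `σ = ŝ₋(λ)`, where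
`ŝ₊(λ) = −(n−1)/2 + w`, `ŝ₋(λ) = −(n−1)/2 − w` and `w² = ((n−1)/2)² − λ`. -/
theorem stmt16 (n : ℕ) (hn : 2 ≤ n) (lam σ w : ℂ)
    (hw : w ^ 2 = (((n : ℂ) - 1) / 2) ^ 2 - lam) :
    (∀ Y ∈ {Y : Fin (n - 1) → ℝ | ∑ j, (Y j) ^ 2 < 1},
      Pop n lam σ (fun Z => (((1 - ∑ j, (Z j) ^ 2 : ℝ)) : ℂ) ^ σ) Y
        = -(lam + σ * ((n : ℂ) - 1 + σ)) *
            (((1 - ∑ j, (Y j) ^ 2 : ℝ)) : ℂ) ^ σ) ∧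
    ((∀ Y ∈ {Y : Fin (n - 1) → ℝ | ∑ j, (Y j) ^ 2 < 1},
      Pop n lam σ (fun Z => (((1 - ∑ j, (Z j) ^ 2 : ℝ)) : ℂ) ^ σ) Y = 0)
        ↔ σ * ((n : ℂ) - 1 + σ) = -lam) ∧
    (σ * ((n : ℂ) - 1 + σ) = -lam
      ↔ (σ = -((n : ℂ) - 1) / 2 + w ∨ σ = -((n : ℂ) - 1) / 2 - w)) := by
  have hball : ∀ Y ∈ {Y : Fin (n - 1) → ℝ | ∑ j, (Y j) ^ 2 < 1},
      Pop n lam σ (fun Z => (((1 - ∑ j, (Z j) ^ 2 : ℝ)) : ℂ) ^ σ) Y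
        = -(lam + σ * ((n : ℂ) - 1 + σ)) * (((1 - ∑ j, (Y j) ^ 2 : ℝ)) : ℂ) ^ σ :=
    fun Y hY => Pop_one_sub_sumSq_cpow (by omega) lam σ hY
  refine ⟨hball, ⟨fun hker => ?_, fun hσ Y hY => ?_⟩, mul_add_eq_neg_iff hw⟩
  · have hcentre := hker 0 (by simp)
    rw [hball 0 (by simp)] at hcentre
    simp only [Pi.zero_apply, ne_eq, OfNat.ofNat_ne_zero, not_false_eq_true, zero_pow,
      Finset.sum_const_zero, sub_zero, Complex.ofReal_one, Complex.one_cpow, mul_one,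
      neg_eq_zero] at hcentre
    linear_combination hcentre
  · rw [hball Y hY, hσ, add_neg_cancel, neg_zero, zero_mul]
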